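/- Let τ be the real 3×3 matrix with rows (0,1,0), (1,0,1), (0,1,0), let g_t := exp(tτ), let σ(x) := x₁+x₂+x₃ for x ∈ ℝ³, and let D := {(v,w) ∈ ℝ³×ℝ³ : σ(v) = 1, σ(w) = 1, v₁w₁ − v₂w₂ + v₃w₃ = 0, and all vᵢ, wᵢ ≥ 0}. Set λ := (1/(2+√2), √2/(2+√2), 1/(2+√2)) ∈ ℝ³. Then (λ, λ) ∈ D, and (λ, λ) is the unique point (v,w) ∈ D satisfying g_t v = σ(g_t v)·v and g_t w = σ(g_t w)·w for all t > 0 (i.e., the unique fixed point in D of the flow (v,w) ↦ (g_t v/σ(g_t v), g_t w/σ(g_t w)) for all t > 0). -/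

import Mathlib

open Matrix

/-- `τ = e₁ + e₂ + f₁ + f₂` is the sum of the Chevalley generators of `sl₃(ℝ)`. -/
def tauMat : Matrix (Fin 3) (Fin 3) ℝ := !![0, 1, 0; 1, 0, 1; 0, 1, 0]

/-- The coordinate sum `σ(x) = x₁ + x₂ + x₃` of a vector `x ∈ ℝ³`. -/
def coordSum (x : Fin 3 → ℝ) : ℝ := x 0 + x 1 + x 2

/-- The realization of the totally nonnegative part of the complete flag variety of
`SL₃(ℝ)`: pairs `(v, w) ∈ ℝ³ × ℝ³` with `σ(v) = 1`, `σ(w) = 1`,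
`v₁w₁ - v₂w₂ + v₃w₃ = 0`, and all coordinates nonnegative. -/
def tnnFlagD : Set ((Fin 3 → ℝ) × (Fin 3 → ℝ)) :=
  {p | coordSum p.1 = 1 ∧ coordSum p.2 = 1 ∧
    p.1 0 * p.2 0 - p.1 1 * p.2 1 + p.1 2 * p.2 2 = 0 ∧
    (∀ i, 0 ≤ p.1 i) ∧ (∀ i, 0 ≤ p.2 i)}

/-- The normalized top eigenvector `λ = (1, √2, 1) / (2 + √2)` of `τ`. -/
noncomputable def lamVec : Fin 3 → ℝ :=
  ![1 / (2 + Real.sqrt 2), Real.sqrt 2 / (2 + Real.sqrt 2), 1 / (2 + Real.sqrt 2)]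

/-!
`τ` has eigenvalues `√2, 0, -√2`, so `τ³ = 2τ` and `exp (tτ) = 1 + a τ + b τ²` with
`a = sinh (√2 t) / √2 > 0` and `b = (cosh (√2 t) - 1) / 2 ≥ 0`; the coefficients are read off
by diagonalizing `τ`. Since `τ λ = √2 λ`, `λ` is an eigenvector of every `g_t`, hence a fixed
point. Conversely, if `v ≥ 0` with `σ v = 1` satisfies `(1 + a τ + b τ²) v = c v`, summing the
coordinates gives `c = 1 + a + 2b + a v₁ > 1`, which forces `v₀ = v₂`, and then the middle
coordinate gives `(v₁ + 1)² = 2`, i.e. `v = λ`.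
-/

open Real

noncomputable def tauEigenvalues : Fin 3 → ℝ := ![√2, 0, -√2]

noncomputable def tauEigenvectors : Matrix (Fin 3) (Fin 3) ℝ :=
  !![1, 1, 1; √2, 0, -√2; 1, -1, 1]

noncomputable def tauEigenvectorsInv : Matrix (Fin 3) (Fin 3) ℝ :=
  !![1 / 4, √2 / 4, 1 / 4; 1 / 2, 0, -(1 / 2); 1 / 4, -(√2 / 4), 1 / 4]

lemma tauEigenvectors_mul_inv : tauEigenvectors * tauEigenvectorsInv = 1 := by
  have h2 : √2 * √2 = 2 := Real.mul_self_sqrt zero_le_two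
  ext i j
  fin_cases i <;> fin_cases j <;>
    simp [tauEigenvectors, tauEigenvectorsInv, Matrix.mul_apply, Fin.sum_univ_three] <;> linarith

lemma tauMat_eq_conj_diagonal :
    tauMat = tauEigenvectors * diagonal tauEigenvalues * tauEigenvectorsInv := by
  have h2 : √2 * √2 = 2 := Real.mul_self_sqrt zero_le_two
  ext i j
  fin_cases i <;> fin_cases j <;>
    simp [tauEigenvalues, tauEigenvectors, tauEigenvectorsInv, tauMat, Matrix.mul_apply,
      Fin.sum_univ_three, vecMul, dotProduct, diagonal_apply] <;>
    linarith

lemma tauMat_sq : tauMat ^ 2 = !![1, 0, 1; 0, 2, 0; 1, 0, 1] := by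
  ext i j
  fin_cases i <;> fin_cases j <;>
    simp [tauMat, sq, Matrix.mul_apply, Fin.sum_univ_three, one_add_one_eq_two]

lemma units_conj_one_add_smul_add_smul_sq {R A : Type*} [CommSemiring R] [Ring A] [Algebra R A]
    (u : Aˣ) (x : A) (a b : R) :
    u * (1 + a • x + b • x ^ 2) * ↑u⁻¹ = 1 + a • (u * x * ↑u⁻¹) + b • (u * x * ↑u⁻¹) ^ 2 := by
  simp only [sq, mul_add, add_mul, Algebra.mul_smul_comm, Algebra.smul_mul_assoc, mul_assoc,
    Units.inv_mul_cancel_left, Units.mul_inv, mul_one]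

lemma exp_smul_diagonal_tauEigenvalues (t : ℝ) :
    NormedSpace.exp (t • diagonal tauEigenvalues) =
      1 + (sinh (√2 * t) / √2) • diagonal tauEigenvalues +
        ((cosh (√2 * t) - 1) / 2) • diagonal tauEigenvalues ^ 2 := by
  simp only [← diagonal_smul, Matrix.exp_diagonal, Pi.exp_def, ← Real.exp_eq_exp_ℝ, diagonal_pow,
    ← diagonal_one, diagonal_add]
  congr 1
  funext i
  fin_cases i <;> simp [tauEigenvalues, mul_comm t, ← cosh_add_sinh] <;> ring

lemma exp_smul_tauMat (t : ℝ) :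
    NormedSpace.exp (t • tauMat) =
      1 + (sinh (√2 * t) / √2) • tauMat + ((cosh (√2 * t) - 1) / 2) • tauMat ^ 2 := by
  let u := Units.mkOfMulEqOne _ _ tauEigenvectors_mul_inv
  have hu : tauMat = u * diagonal tauEigenvalues * (↑u⁻¹ : Matrix (Fin 3) (Fin 3) ℝ) :=
    tauMat_eq_conj_diagonal
  rw [hu, ← units_conj_one_add_smul_add_smul_sq, ← exp_smul_diagonal_tauEigenvalues,
    ← Matrix.exp_units_conj, Matrix.mul_smul, Matrix.smul_mul]

lemma lamVec_eq : lamVec = ![1 - √2 / 2, √2 - 1, 1 - √2 / 2] := by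
  ext i
  fin_cases i <;> simp [lamVec] <;> field_simp <;> (ring_nf; norm_num)

lemma lamVec_nonneg (i : Fin 3) : 0 ≤ lamVec i := by
  fin_cases i <;> simp [lamVec] <;> positivity

lemma coordSum_lamVec : coordSum lamVec = 1 := by
  simp only [coordSum, lamVec_eq, cons_val_zero, cons_val_one, cons_val]
  ring

lemma lamVec_mem_tnnFlagD : (lamVec, lamVec) ∈ tnnFlagD := by
  refine ⟨coordSum_lamVec, coordSum_lamVec, ?_, lamVec_nonneg, lamVec_nonneg⟩
  simp only [lamVec_eq, cons_val_zero, cons_val_one, cons_val]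
  ring_nf
  norm_num

lemma tauMat_mulVec_lamVec : tauMat *ᵥ lamVec = √2 • lamVec := by
  have h2 : √2 * √2 = 2 := Real.mul_self_sqrt zero_le_two
  rw [lamVec_eq]
  ext i
  fin_cases i <;> simp [tauMat, mulVec, dotProduct, Fin.sum_univ_three] <;> linarith

lemma quadratic_tauMat_mulVec_lamVec (a b : ℝ) :
    (1 + a • tauMat + b • tauMat ^ 2) *ᵥ lamVec = (1 + a * √2 + b * 2) • lamVec := by
  simp only [add_mulVec, one_mulVec, smul_mulVec, sq, ← mulVec_mulVec, tauMat_mulVec_lamVec,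
    mulVec_smul, smul_smul, Real.mul_self_sqrt zero_le_two, add_smul, one_smul]

lemma mulVec_eq_coordSum_smul_of_eq_smul {M : Matrix (Fin 3) (Fin 3) ℝ} {v : Fin 3 → ℝ} {c : ℝ}
    (h : M *ᵥ v = c • v) (hv : coordSum v = 1) : M *ᵥ v = coordSum (M *ᵥ v) • v := by
  rw [h]
  congr 1
  simp only [coordSum, Pi.smul_apply, smul_eq_mul] at hv ⊢
  linear_combination -c * hv

lemma eq_lamVec_of_quadratic_tauMat_mulVec_eq_smul {a b c : ℝ} (ha : 0 < a) (hb : 0 ≤ b)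
    {v : Fin 3 → ℝ} (hv : ∀ i, 0 ≤ v i) (hσ : coordSum v = 1)
    (h : (1 + a • tauMat + b • tauMat ^ 2) *ᵥ v = c • v) : v = lamVec := by
  rw [tauMat_sq] at h
  have e0 : (1 + b) * v 0 + a * v 1 + b * v 2 = c * v 0 := by
    simpa [tauMat, mulVec, dotProduct, Fin.sum_univ_three] using congrFun h 0
  have e1 : a * v 0 + (1 + b * 2) * v 1 + a * v 2 = c * v 1 := by
    simpa [tauMat, mulVec, dotProduct, Fin.sum_univ_three] using congrFun h 1
  have e2 : b * v 0 + a * v 1 + (1 + b) * v 2 = c * v 2 := by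
    simpa [tauMat, mulVec, dotProduct, Fin.sum_univ_three] using congrFun h 2
  unfold coordSum at hσ
  have hc : c = 1 + a + 2 * b + a * v 1 := by
    linear_combination -e0 - e1 - e2 + (1 + a + 2 * b - c) * hσ
  have h02 : v 0 = v 2 := by
    have hc1 : c - 1 ≠ 0 := by nlinarith [hv 1]
    have : (c - 1) * (v 0 - v 2) = 0 := by linear_combination e2 - e0
    linarith [(mul_eq_zero.mp this).resolve_left hc1]
  have hv1 : v 1 = √2 - 1 := by
    have : a * ((v 1 + 1) ^ 2 - 2) = 0 := by linear_combination -e1 - v 1 * hc + a * hσ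
    have hsq : (v 1 + 1) ^ 2 = 2 := by linarith [(mul_eq_zero.mp this).resolve_left ha.ne']
    rw [← hsq, Real.sqrt_sq (by linarith [hv 1])]
    ring
  rw [lamVec_eq]
  ext i
  fin_cases i <;> simp <;> linarith

/-- `(λ, λ)` lies in `D`, and it is the unique point `(v, w)` of `D` satisfying
`g_t v = σ(g_t v) • v` and `g_t w = σ(g_t w) • w` for all `t > 0`, i.e. the unique fixed
point of the flow `(v, w) ↦ (g_t v / σ(g_t v), g_t w / σ(g_t w))` on `D` for all `t > 0`,
where `g_t = exp(t τ)`. -/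
theorem lamVec_unique_fixed_point :
    ((lamVec, lamVec) ∈ tnnFlagD ∧
      ∀ t : ℝ, 0 < t →
        (NormedSpace.exp (t • tauMat)).mulVec lamVec =
          coordSum ((NormedSpace.exp (t • tauMat)).mulVec lamVec) • lamVec) ∧
    ∀ v w : Fin 3 → ℝ, (v, w) ∈ tnnFlagD →
      (∀ t : ℝ, 0 < t →
        (NormedSpace.exp (t • tauMat)).mulVec v =
          coordSum ((NormedSpace.exp (t • tauMat)).mulVec v) • v ∧
        (NormedSpace.exp (t • tauMat)).mulVec w =
          coordSum ((NormedSpace.exp (t • tauMat)).mulVec w) • w) →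
      v = lamVec ∧ w = lamVec := by
  refine ⟨⟨lamVec_mem_tnnFlagD, fun t _ => ?_⟩, fun v w ⟨hσv, hσw, _, hv, hw⟩ hfix => ?_⟩
  · rw [exp_smul_tauMat]
    exact mulVec_eq_coordSum_smul_of_eq_smul (quadratic_tauMat_mulVec_lamVec _ _) coordSum_lamVec
  · obtain ⟨hfv, hfw⟩ := hfix 1 one_pos
    rw [exp_smul_tauMat] at hfv hfw
    have ha : 0 < sinh (√2 * 1) / √2 := by positivity
    have hb : 0 ≤ (cosh (√2 * 1) - 1) / 2 := by linarith [one_le_cosh (√2 * 1)]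
    exact ⟨eq_lamVec_of_quadratic_tauMat_mulVec_eq_smul ha hb hv hσv hfv,
      eq_lamVec_of_quadratic_tauMat_mulVec_eq_smul ha hb hw hσw hfw⟩
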